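/- The curve α*(u) = (u, (u/6)(2 cosh(2 ln u) − sinh(2 ln u)), (u/6)(-cosh(2 ln u) + 2 sinh(2 ln u))), for u > 0, satisfies κ(u) = 1/u and τ(u) = 2/u, where κ(u) = √|y''(u)² − z''(u)²| and τ(u) = (y''z''' − y'''z'')/κ². In particular, the ratio τ/κ is constant (equal to 2), so α* is a general helix in G³₁. -/

import Mathlib

noncomputable def yαs : ℝ → ℝ := fun u =>
  u / 6 * (2 * Real.cosh (2 * Real.log u) - Real.sinh (2 * Real.log u))

noncomputable def zαs : ℝ → ℝ := fun u =>
  u / 6 * (-(Real.cosh (2 * Real.log u)) + 2 * Real.sinh (2 * Real.log u))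

noncomputable def καs : ℝ → ℝ := fun u =>
  Real.sqrt |(deriv (deriv yαs) u) ^ 2 - (deriv (deriv zαs) u) ^ 2|

noncomputable def ταs : ℝ → ℝ := fun u =>
  (deriv (deriv yαs) u * deriv (deriv (deriv zαs)) u -
      deriv (deriv (deriv yαs)) u * deriv (deriv zαs) u) / (καs u) ^ 2

/-!
On `u > 0` we have `cosh (2 log u) = (u² + u⁻²)/2` and `sinh (2 log u) = (u² - u⁻²)/2`, so the
hyperbolic expressions collapse to Laurent polynomials: `y = u³/12 + u⁻¹/4` and
`z = u³/12 - u⁻¹/4`. Then `y'' = (u + u⁻³)/2`, `z'' = (u - u⁻³)/2`, hence `y''² - z''² = u⁻²`,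
and the torsion numerator is `2u⁻³`.
-/

open Set Real

lemma Set.EqOn.deriv_mul_zpow_add_mul_zpow {f : ℝ → ℝ} {a b : ℝ} {p q : ℤ}
    (hf : EqOn f (fun u => a * u ^ p + b * u ^ q) (Ioi 0)) :
    EqOn (_root_.deriv f) (fun u => a * p * u ^ (p - 1) + b * q * u ^ (q - 1)) (Ioi 0) := by
  intro u hu
  have hderiv : HasDerivAt (fun u => a * u ^ p + b * u ^ q)
      (a * (p * u ^ (p - 1)) + b * (q * u ^ (q - 1))) u :=
    ((hasDerivAt_zpow p u (.inl hu.ne')).const_mul a).add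
      ((hasDerivAt_zpow q u (.inl hu.ne')).const_mul b)
  rw [hf.deriv isOpen_Ioi hu, hderiv.deriv]
  ring

lemma cosh_two_mul_log {u : ℝ} (hu : 0 < u) : cosh (2 * log u) = (u ^ 2 + (u ^ 2)⁻¹) / 2 := by
  rw [show 2 * log u = log (u ^ 2) by rw [log_pow]; norm_num, cosh_log (by positivity)]

lemma sinh_two_mul_log {u : ℝ} (hu : 0 < u) : sinh (2 * log u) = (u ^ 2 - (u ^ 2)⁻¹) / 2 := by
  rw [show 2 * log u = log (u ^ 2) by rw [log_pow]; norm_num, sinh_log (by positivity)]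

lemma yαs_eqOn : EqOn yαs (fun u => 12⁻¹ * u ^ (3 : ℤ) + 4⁻¹ * u ^ (-1 : ℤ)) (Ioi 0) := by
  intro u hu
  simp only [yαs, cosh_two_mul_log hu, sinh_two_mul_log hu, zpow_neg, zpow_ofNat]
  field_simp
  ring

lemma zαs_eqOn : EqOn zαs (fun u => 12⁻¹ * u ^ (3 : ℤ) + (-4⁻¹) * u ^ (-1 : ℤ)) (Ioi 0) := by
  intro u hu
  simp only [zαs, cosh_two_mul_log hu, sinh_two_mul_log hu, zpow_neg, zpow_ofNat]
  field_simp
  ring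

section

variable {u : ℝ}

lemma deriv_deriv_yαs (hu : 0 < u) : deriv (deriv yαs) u = (u + (u ^ 3)⁻¹) / 2 := by
  have h := (yαs_eqOn).deriv_mul_zpow_add_mul_zpow.deriv_mul_zpow_add_mul_zpow hu
  norm_num at h
  rw [h]; ring

lemma deriv_deriv_zαs (hu : 0 < u) : deriv (deriv zαs) u = (u - (u ^ 3)⁻¹) / 2 := by
  have h := (zαs_eqOn).deriv_mul_zpow_add_mul_zpow.deriv_mul_zpow_add_mul_zpow hu
  norm_num at h
  rw [h]; ring

lemma deriv_deriv_deriv_yαs (hu : 0 < u) : deriv (deriv (deriv yαs)) u = (1 - 3 * (u ^ 4)⁻¹) / 2 := by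
  have h := (yαs_eqOn).deriv_mul_zpow_add_mul_zpow.deriv_mul_zpow_add_mul_zpow
    |>.deriv_mul_zpow_add_mul_zpow hu
  norm_num at h
  rw [h]; ring

lemma deriv_deriv_deriv_zαs (hu : 0 < u) : deriv (deriv (deriv zαs)) u = (1 + 3 * (u ^ 4)⁻¹) / 2 := by
  have h := (zαs_eqOn).deriv_mul_zpow_add_mul_zpow.deriv_mul_zpow_add_mul_zpow
    |>.deriv_mul_zpow_add_mul_zpow hu
  norm_num at h
  rw [h]; ring

lemma καs_eq (hu : 0 < u) : καs u = 1 / u := by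
  have h : deriv (deriv yαs) u ^ 2 - deriv (deriv zαs) u ^ 2 = (1 / u) ^ 2 := by
    rw [deriv_deriv_yαs hu, deriv_deriv_zαs hu]
    field_simp
    ring
  rw [καs, h, abs_of_nonneg (by positivity), sqrt_sq (by positivity)]

lemma ταs_eq (hu : 0 < u) : ταs u = 2 / u := by
  rw [ταs, καs_eq hu, deriv_deriv_yαs hu, deriv_deriv_zαs hu, deriv_deriv_deriv_yαs hu,
    deriv_deriv_deriv_zαs hu]
  field_simp
  ring

end

theorem stmt3 :
    (∀ u : ℝ, 0 < u → καs u = 1 / u ∧ ταs u = 2 / u) ∧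
    (∀ u : ℝ, 0 < u → ταs u / καs u = 2) := by
  refine ⟨fun u hu => ⟨καs_eq hu, ταs_eq hu⟩, fun u hu => ?_⟩
  rw [καs_eq hu, ταs_eq hu]
  field_simp
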